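/- With g = sl(n+2,ℝ) in the contact grading, the element s = diag(-1, I_n, -1) is, up to the center of GL(n+2,ℝ) (scalar matrices), the unique invertible matrix g₀ normalizing the decomposition g = n ⊕ h with Ad(g₀)|_h = id and Ad(g₀)|_n = -id. Equivalently: if g₀ ∈ GL(n+2, ℝ) satisfies g₀ X g₀⁻¹ = X for all X ∈ h and g₀ X g₀⁻¹ = -X for all X ∈ n, then g₀ = μ·diag(-1, I_n, -1) for some nonzero scalar μ. -/

import Mathlib

open Matrix

/-- Index type for `(n+2)×(n+2)` matrices in block form with blocks of sizes `1, n, 1`. -/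
abbrev CIdx (n : ℕ) := Fin 1 ⊕ Fin n ⊕ Fin 1

/-- Block number (1, 2 or 3) of an index. -/
def cblk {n : ℕ} : CIdx n → ℤ
  | .inl _ => 1
  | .inr (.inl _) => 2
  | .inr (.inr _) => 3

/-- The grading components of `sl(n+2, ℝ)` for the contact grading: `cg n k` consists of
the traceless matrices supported on the block positions `(r,s)` with `s - r = k`
(blocks numbered 1, 2, 3, of sizes 1, n, 1).  So `cg n (-2)` is the lower-left corner
entry, `cg n (-1)` the `(2,1)` and `(3,2)` blocks, `cg n 0` the traceless block-diagonal
part, etc., and `cg n k = {0}` for `|k| > 2`. -/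
def cg (n : ℕ) (k : ℤ) : Set (Matrix (CIdx n) (CIdx n) ℝ) :=
  {X | Matrix.trace X = 0 ∧ ∀ a b, cblk b - cblk a ≠ k → X a b = 0}

/-- `h = g₋₂ ⊕ g₀ ⊕ g₂`: traceless matrices supported on blocks of even degree. -/
def hSet (n : ℕ) : Set (Matrix (CIdx n) (CIdx n) ℝ) :=
  {X | Matrix.trace X = 0 ∧
    ∀ a b, ¬(cblk b - cblk a = -2 ∨ cblk b - cblk a = 0 ∨ cblk b - cblk a = 2) → X a b = 0}

/-- `n = g₋₁ ⊕ g₁`: matrices supported on blocks of odd degree. -/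
def nSet (n : ℕ) : Set (Matrix (CIdx n) (CIdx n) ℝ) :=
  {X | ∀ a b, ¬(cblk b - cblk a = -1 ∨ cblk b - cblk a = 1) → X a b = 0}

/-- The diagonal matrix `s = diag(-1, I_n, -1)` (determinant 1). -/
def sMat (n : ℕ) : Matrix (CIdx n) (CIdx n) ℝ :=
  Matrix.diagonal (fun a => match a with
    | .inl _ => -1
    | .inr (.inl _) => 1
    | .inr (.inr _) => -1)

/-! Every row of `g` is read off from a single anticommutation relation
`g * E_uv = -(E_uv * g)` with an odd elementary matrix `E_uv`: row `v` of `g` vanishes off the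
diagonal and `g v v = -g u u`. Since `n > 0`, every index is joined to another by an odd block
step, so `g` is diagonal, and the signs propagate along the steps `1 → 2 → 3` to give the
pattern `(-1, 1, …, 1, -1)`. -/

section Anticommute

variable {ι R : Type*} [Fintype ι] [DecidableEq ι] [Ring R] {g : Matrix ι ι R} {u v : ι}

theorem Matrix.apply_eq_zero_of_mul_single_eq_neg
    (h : g * single u v 1 = -(single u v 1 * g)) {q : ι} (hq : q ≠ v) : g v q = 0 := by
  have huq := congr($h u q)
  rw [neg_apply, mul_single_apply_of_ne (hbj := hq), single_mul_apply_same, one_mul] at huq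
  exact neg_eq_zero.mp huq.symm

theorem Matrix.apply_self_eq_neg_of_mul_single_eq_neg
    (h : g * single u v 1 = -(single u v 1 * g)) : g v v = -g u u := by
  have huv := congr($h u v)
  rw [neg_apply, mul_single_apply_same, single_mul_apply_same, one_mul, mul_one] at huv
  exact neg_eq_iff_eq_neg.mp huv.symm

end Anticommute

theorem Matrix.mul_eq_neg_mul_of_conj_eq_neg {ι R : Type*} [Fintype ι] [DecidableEq ι]
    [CommRing R] {g X : Matrix ι ι R} (hg : IsUnit g.det) (h : g * X * g⁻¹ = -X) :
    g * X = -(X * g) := by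
  rw [← nonsing_inv_mul_cancel_right (A := g) (g * X) hg, h, neg_mul]

theorem single_mem_nSet {n : ℕ} {u v : CIdx n}
    (huv : cblk v - cblk u = -1 ∨ cblk v - cblk u = 1) : single u v (1 : ℝ) ∈ nSet n := by
  intro p q hpq
  refine single_apply_of_ne (i := u) (j := v) (c := (1 : ℝ)) (i' := p) (j' := q) ?_
  rintro ⟨rfl, rfl⟩
  exact hpq huv

theorem eq_smul_sMat_of_anticommute {n : ℕ} (hn : 0 < n) {g : Matrix (CIdx n) (CIdx n) ℝ}
    (anti : ∀ u v : CIdx n, (cblk v - cblk u = -1 ∨ cblk v - cblk u = 1) →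
      g * single u v 1 = -(single u v 1 * g)) :
    g = g (.inr (.inl ⟨0, hn⟩)) (.inr (.inl ⟨0, hn⟩)) • sMat n := by
  set i₀ : CIdx n := .inr (.inl ⟨0, hn⟩)
  have first (x : Fin 1) : g (.inl x) (.inl x) = -g i₀ i₀ :=
    apply_self_eq_neg_of_mul_single_eq_neg (anti i₀ _ (by simp [cblk, i₀]))
  have mid (i : Fin n) : g (.inr (.inl i)) (.inr (.inl i)) = g i₀ i₀ := by
    rw [apply_self_eq_neg_of_mul_single_eq_neg (anti (.inl 0) _ (by simp [cblk])), first, neg_neg]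
  have last (x : Fin 1) : g (.inr (.inr x)) (.inr (.inr x)) = -g i₀ i₀ :=
    apply_self_eq_neg_of_mul_single_eq_neg (anti i₀ _ (by simp [cblk, i₀]))
  have hdiag : g.IsDiag := by
    intro v q hvq
    obtain ⟨u, hu⟩ : ∃ u : CIdx n, cblk v - cblk u = -1 ∨ cblk v - cblk u = 1 := by
      rcases v with _ | _ | _
      exacts [⟨i₀, by simp [cblk, i₀]⟩, ⟨.inl 0, by simp [cblk]⟩, ⟨i₀, by simp [cblk, i₀]⟩]
    exact apply_eq_zero_of_mul_single_eq_neg (anti u v hu) (Ne.symm hvq)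
  rw [sMat, ← diagonal_smul]
  conv_lhs => rw [← hdiag.diagonal_diag]
  congr 1
  funext v
  rcases v with x | i | x <;> simp [first, mid, last]

theorem ad_minus_id_unique_up_to_center_general (n : ℕ) (hn : 0 < n)
    (g : Matrix (CIdx n) (CIdx n) ℝ) (hg : IsUnit g.det)
    (h2 : ∀ X ∈ nSet n, g * X * g⁻¹ = -X) :
    ∃ m : ℝ, m ≠ 0 ∧ g = m • sMat n := by
  have hsmul := eq_smul_sMat_of_anticommute hn fun u v huv =>
    mul_eq_neg_mul_of_conj_eq_neg hg (h2 _ (single_mem_nSet huv))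
  refine ⟨_, fun hm => ?_, hsmul⟩
  rw [hsmul, hm, zero_smul, det_zero] at hg
  exact not_isUnit_zero hg

/-- Uniqueness up to scalars: any invertible matrix `g₀` with `Ad(g₀) = id` on
`h = g₋₂ ⊕ g₀ ⊕ g₂` and `Ad(g₀) = -id` on `n = g₋₁ ⊕ g₁` is a nonzero scalar
multiple of `s = diag(-1, I_n, -1)`. -/
theorem ad_minus_id_unique_up_to_center (n : ℕ) (hn : 0 < n)
    (g : Matrix (CIdx n) (CIdx n) ℝ) (hg : IsUnit g.det)
    (h1 : ∀ X ∈ hSet n, g * X * g⁻¹ = X)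
    (h2 : ∀ X ∈ nSet n, g * X * g⁻¹ = -X) :
    ∃ m : ℝ, m ≠ 0 ∧ g = m • sMat n :=
  ad_minus_id_unique_up_to_center_general n hn g hg h2
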